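/- arXiv:2202.09399 — 2 statements merged into one kernel-verified Lean document; each statement's English description precedes it below -/
import Mathlib

section
/- Let E be a finite effect algebra with (pairwise distinct) atoms a_1,…,a_m and let A = (y_{it}) ∈ M(E) be an n×m matrix whose rows enumerate Seq(E). If there exist nonnegative real numbers s_1,…,s_m such that Σ_{t=1}^m y_{it} s_t = 1 for every 1 ≤ i ≤ n, then E has a state; namely, the map h defined by h(k_1 a_1 ⊕ … ⊕ k_m a_m) = Σ_{t=1}^m k_t s_t is a well-defined state on E. -/
/-- An effect algebra: a set with 0, 1 and a partially defined binary
operation `⊕`, modeled as an `Option`-valued operation. -/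
structure EffectAlgebra (E : Type*) where
  oplus : E → E → Option E
  zero : E
  one : E
  comm : ∀ p q, oplus p q = oplus q p
  assoc : ∀ p q r s qr, oplus q r = some qr → oplus p qr = some s →
    ∃ pq, oplus p q = some pq ∧ oplus pq r = some s
  orthosupp : ∀ p, ∃! q, oplus p q = some one
  zero_unit : ∀ p q, oplus one p = some q → p = zero

namespace EffectAlgebra

variable {E : Type*}

/-- `p ≤ q` iff there is `r` with `p ⊕ r` defined and equal to `q`. -/
def le (W : EffectAlgebra E) (p q : E) : Prop := ∃ r, W.oplus p r = some q

/-- An atom is a minimal element of `E \ {0}`. -/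
def IsAtomElem (W : EffectAlgebra E) (x : E) : Prop :=
  x ≠ W.zero ∧ ∀ y : E, W.le y x → y ≠ W.zero → y = x

/-- Partial orthosum of a list of elements. -/
def listSum (W : EffectAlgebra E) : List E → Option E
  | [] => some W.zero
  | x :: xs => (listSum W xs).bind (fun y => W.oplus x y)

/-- The orthosum `k 0 • a 0 ⊕ ⋯ ⊕ k (m-1) • a (m-1)`, when defined. -/
def mulSum (W : EffectAlgebra E) {m : ℕ} (a : Fin m → E) (k : Fin m → ℕ) : Option E :=
  W.listSum ((List.ofFn (fun t => List.replicate (k t) (a t))).flatten)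

/-- `Seq(E)`: tuples `k` with `⨁ k t • a t` defined and equal to `1`. -/
def SeqSet (W : EffectAlgebra E) {m : ℕ} (a : Fin m → E) : Set (Fin m → ℕ) :=
  {k | W.mulSum a k = some W.one}

/-- `a : Fin m → E` enumerates the atoms of `E` without repetition. -/
def AtomFamily (W : EffectAlgebra E) {m : ℕ} (a : Fin m → E) : Prop :=
  Function.Injective a ∧ (∀ t, W.IsAtomElem (a t)) ∧
    ∀ x : E, W.IsAtomElem x → ∃ t, x = a t

/-- `A ∈ M(E)`: the rows of `A` are pairwise distinct and enumerate `Seq(E)`. -/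
def MemM (W : EffectAlgebra E) {m n : ℕ} (a : Fin m → E) (A : Matrix (Fin n) (Fin m) ℕ) : Prop :=
  (∀ i j : Fin n, i ≠ j → ∃ t, A i t ≠ A j t) ∧
    {k : Fin m → ℕ | ∃ i, A i = k} = W.SeqSet a

/-- A state on an effect algebra. -/
def IsState (W : EffectAlgebra E) (s : E → ℝ) : Prop :=
  (∀ x, 0 ≤ s x ∧ s x ≤ 1) ∧ s W.one = 1 ∧
    ∀ p q r, W.oplus p q = some r → s p + s q ≤ 1 ∧ s r = s p + s q

end EffectAlgebra

/-- `(A|1)`: the matrix `A` augmented by a column of ones. -/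
def augmentOnes {n m : ℕ} {R : Type*} [One R] (A : Matrix (Fin n) (Fin m) R) :
    Matrix (Fin n) (Fin (m + 1)) R :=
  Matrix.of fun i j => if h : (j : ℕ) < m then A i ⟨j, h⟩ else 1

/-!
Every element of a finite effect algebra is an orthosum of multiples of atoms: split off an atom
below it and descend in the (finite) order `p ≤ p ⊕ r`. Orthosums of multiples of the atoms add
coordinatewise, by commutativity and associativity of `⊕`. So if `x = ⨁ k t • a t` and its
orthosupplement is `x' = ⨁ k' t • a t`, then `k + k' ∈ Seq(E)`, whence
`∑ k t * s t = 1 - ∑ k' t * s t`. Hence the weight `∑ k t * s t` depends only on `x`, and it is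
additive, normalized and bounded by `1`.
-/

lemma sum_natCast_add_mul {ι : Type*} [Fintype ι] (k k' : ι → ℕ) (s : ι → ℝ) :
    ∑ t, ((k + k') t : ℝ) * s t = ∑ t, (k t : ℝ) * s t + ∑ t, (k' t : ℝ) * s t := by
  simp only [Pi.add_apply, Nat.cast_add, add_mul, Finset.sum_add_distrib]

lemma List.Perm.flatten_ofFn_append {α : Type*} {m : ℕ} (f g : Fin m → List α) :
    (List.ofFn fun t => f t ++ g t).flatten.Perm
      ((List.ofFn f).flatten ++ (List.ofFn g).flatten) := by
  induction m with
  | zero => simp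
  | succ m ih =>
    simp only [List.ofFn_succ, List.flatten_cons, List.append_assoc]
    exact .append_left _ (((ih _ _).append_left _).trans (List.perm_append_comm_assoc _ _ _))

lemma List.flatten_ofFn_eq_of_eq_nil {α : Type*} {m : ℕ} (L : Fin m → List α) (t : Fin m)
    (hL : ∀ u, u ≠ t → L u = []) : (List.ofFn L).flatten = L t := by
  induction m with
  | zero => exact t.elim0
  | succ m ih =>
    rw [List.ofFn_succ, List.flatten_cons]
    rcases Fin.eq_zero_or_eq_succ t with rfl | ⟨u, rfl⟩
    · simp [hL _ (Fin.succ_ne_zero _)]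
    · rw [hL 0 (Fin.succ_ne_zero u).symm, List.nil_append]
      exact ih _ u fun v hv => hL v.succ (hv ∘ Fin.succ_inj.mp)

namespace EffectAlgebra

variable {E : Type*} (W : EffectAlgebra E)

lemma oplus_swap {p q r : E} (h : W.oplus p q = some r) : W.oplus q p = some r := by
  rwa [W.comm]

lemma one_oplus_zero : W.oplus W.one W.zero = some W.one := by
  obtain ⟨q, hq, -⟩ := W.orthosupp W.one
  rwa [W.zero_unit q W.one hq] at hq

lemma zero_oplus (x : E) : W.oplus W.zero x = some x := by
  obtain ⟨x', hx', -⟩ := W.orthosupp x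
  obtain ⟨y, hy, hy'⟩ := W.assoc W.zero x x' W.one W.one hx' (W.oplus_swap W.one_oplus_zero)
  obtain ⟨q, -, huniq⟩ := W.orthosupp x'
  rw [hy, huniq y (W.oplus_swap hy'), huniq x (W.oplus_swap hx')]

lemma oplus_zero (x : E) : W.oplus x W.zero = some x :=
  W.oplus_swap (W.zero_oplus x)

lemma assoc' {p q r s pq : E} (hpq : W.oplus p q = some pq) (hs : W.oplus pq r = some s) :
    ∃ qr, W.oplus q r = some qr ∧ W.oplus p qr = some s := by
  obtain ⟨rq, hrq, hs'⟩ := W.assoc r q p s pq (W.oplus_swap hpq) (W.oplus_swap hs)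
  exact ⟨rq, W.oplus_swap hrq, W.oplus_swap hs'⟩

lemma cancel_left {x b c d : E} (hb : W.oplus x b = some d) (hc : W.oplus x c = some d) :
    b = c := by
  obtain ⟨d', hd', -⟩ := W.orthosupp d
  obtain ⟨y, hy, hby⟩ := W.assoc' (W.oplus_swap hb) hd'
  obtain ⟨y', hy', hcy'⟩ := W.assoc' (W.oplus_swap hc) hd'
  obtain rfl : y = y' := Option.some.inj (hy.symm.trans hy')
  obtain ⟨q, -, huniq⟩ := W.orthosupp y
  rw [huniq b (W.oplus_swap hby), huniq c (W.oplus_swap hcy')]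

lemma eq_zero_of_oplus_eq_zero {p q : E} (h : W.oplus p q = some W.zero) : p = W.zero := by
  obtain ⟨pq, hpq, -⟩ := W.assoc W.one p q W.one W.zero h W.one_oplus_zero
  exact W.zero_unit p pq hpq

abbrev toPartialOrder : PartialOrder E where
  le := W.le
  le_refl x := ⟨W.zero, W.oplus_zero x⟩
  le_trans := by
    rintro x y z ⟨r, hr⟩ ⟨r', hr'⟩
    obtain ⟨rr', -, h⟩ := W.assoc' hr hr'
    exact ⟨rr', h⟩
  le_antisymm := by
    rintro x y ⟨r, hr⟩ ⟨r', hr'⟩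
    obtain ⟨rr', hrr', hx⟩ := W.assoc' hr hr'
    obtain rfl : rr' = W.zero := W.cancel_left hx (W.oplus_zero x)
    obtain rfl : r = W.zero := W.eq_zero_of_oplus_eq_zero hrr'
    exact Option.some.inj ((W.oplus_zero x).symm.trans hr)

lemma exists_atom_le [Finite E] {x : E} (hx : x ≠ W.zero) : ∃ y, W.IsAtomElem y ∧ W.le y x := by
  let := W.toPartialOrder
  obtain ⟨y, hyx, hmin⟩ :=
    (Set.toFinite {z : E | z ≠ W.zero ∧ z ≤ x}).exists_le_minimal (a := x) ⟨hx, le_rfl⟩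
  exact ⟨y, ⟨hmin.prop.1, fun z hzy hz => le_antisymm hzy (hmin.2 ⟨hz, le_trans hzy hyx⟩ hzy)⟩,
    hyx⟩

lemma bind_oplus_comm (x y z : E) :
    (W.oplus x z).bind (W.oplus y) = (W.oplus y z).bind (W.oplus x) := by
  suffices key : ∀ x y s, (W.oplus x z).bind (W.oplus y) = some s →
      (W.oplus y z).bind (W.oplus x) = some s from
    Option.ext fun s => ⟨key x y s, key y x s⟩
  intro x y s h
  obtain ⟨xz, hxz, hs⟩ := Option.bind_eq_some_iff.mp h
  obtain ⟨yx, hyx, hs'⟩ := W.assoc y x z s xz hxz hs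
  obtain ⟨yz, hyz, hs''⟩ := W.assoc' (W.oplus_swap hyx) hs'
  rw [hyz, Option.bind_some, hs'']

lemma listSum_perm {L L' : List E} (h : L.Perm L') : W.listSum L = W.listSum L' := by
  induction h with
  | nil => rfl
  | cons x _ ih => simp only [listSum, ih]
  | swap x y l =>
    simp only [listSum, Option.bind_assoc]
    exact congrArg _ (funext fun z => W.bind_oplus_comm x y z)
  | trans _ _ ih₁ ih₂ => rw [ih₁, ih₂]

lemma listSum_append {L₁ L₂ : List E} {x y z : E} (h₁ : W.listSum L₁ = some x)
    (h₂ : W.listSum L₂ = some y) (hxy : W.oplus x y = some z) :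
    W.listSum (L₁ ++ L₂) = some z := by
  induction L₁ generalizing x z with
  | nil =>
    obtain rfl : W.zero = x := Option.some.inj h₁
    rw [W.zero_oplus, Option.some_inj] at hxy
    subst hxy
    exact h₂
  | cons b L₁ ih =>
    obtain ⟨x₁, hx₁, hbx₁⟩ := Option.bind_eq_some_iff.mp h₁
    obtain ⟨x₁y, hx₁y, hz⟩ := W.assoc' hbx₁ hxy
    simp only [List.cons_append, listSum, ih hx₁ hx₁y, Option.bind_some, hz]

variable {m : ℕ} (a : Fin m → E)

lemma mulSum_zero : W.mulSum a 0 = some W.zero := by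
  simp [mulSum, listSum]

lemma mulSum_single (t : Fin m) : W.mulSum a (Pi.single t 1) = some (a t) := by
  rw [mulSum, List.flatten_ofFn_eq_of_eq_nil _ t fun u hu => by simp [hu]]
  simp [listSum, W.oplus_zero]

variable {a}

lemma mulSum_add {k k' : Fin m → ℕ} {x y z : E} (hk : W.mulSum a k = some x)
    (hk' : W.mulSum a k' = some y) (hxy : W.oplus x y = some z) :
    W.mulSum a (k + k') = some z := by
  simp only [mulSum, Pi.add_apply, List.replicate_add] at hk hk' ⊢
  rw [W.listSum_perm (List.Perm.flatten_ofFn_append _ _)]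
  exact W.listSum_append hk hk' hxy

lemma exists_mulSum_eq [Finite E] (ha : ∀ x, W.IsAtomElem x → ∃ t, x = a t) (x : E) :
    ∃ k, W.mulSum a k = some x := by
  let := W.toPartialOrder
  induction x using WellFoundedLT.induction with | _ x ih => ?_
  by_cases hx : x = W.zero
  · exact ⟨0, hx ▸ W.mulSum_zero a⟩
  obtain ⟨y, hy, r, hr⟩ := W.exists_atom_le hx
  obtain ⟨t, rfl⟩ := ha y hy
  have hrx : r < x := by
    refine lt_of_le_of_ne ⟨a t, W.oplus_swap hr⟩ fun hrx => hy.1 ?_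
    subst hrx
    exact W.cancel_left (W.oplus_swap hr) (W.oplus_zero r)
  obtain ⟨k, hk⟩ := ih r hrx
  exact ⟨k + Pi.single t 1, W.mulSum_add hk (W.mulSum_single a t) (W.oplus_swap hr)⟩

variable {s : Fin m → ℝ}

lemma sum_mul_add_sum_mul_eq_one (hseq : ∀ k ∈ W.SeqSet a, ∑ t, (k t : ℝ) * s t = 1)
    {k k' : Fin m → ℕ} {x y : E} (hk : W.mulSum a k = some x) (hk' : W.mulSum a k' = some y)
    (hxy : W.oplus x y = some W.one) :
    ∑ t, (k t : ℝ) * s t + ∑ t, (k' t : ℝ) * s t = 1 :=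
  sum_natCast_add_mul k k' s ▸ hseq _ (W.mulSum_add hk hk' hxy)

lemma sum_mul_eq_of_mulSum_eq [Finite E] (ha : ∀ x, W.IsAtomElem x → ∃ t, x = a t)
    (hseq : ∀ k ∈ W.SeqSet a, ∑ t, (k t : ℝ) * s t = 1) {k k' : Fin m → ℕ} {x : E}
    (hk : W.mulSum a k = some x) (hk' : W.mulSum a k' = some x) :
    ∑ t, (k t : ℝ) * s t = ∑ t, (k' t : ℝ) * s t := by
  obtain ⟨x', hx', -⟩ := W.orthosupp x
  obtain ⟨k'', hk''⟩ := W.exists_mulSum_eq ha x'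
  linarith [W.sum_mul_add_sum_mul_eq_one hseq hk hk'' hx',
    W.sum_mul_add_sum_mul_eq_one hseq hk' hk'' hx']

theorem exists_isState_of_forall_mem_seqSet [Finite E] (ha : ∀ x, W.IsAtomElem x → ∃ t, x = a t)
    (hs : ∀ t, 0 ≤ s t) (hseq : ∀ k ∈ W.SeqSet a, ∑ t, (k t : ℝ) * s t = 1) :
    ∃ h : E → ℝ, W.IsState h ∧
      ∀ (k : Fin m → ℕ) (x : E), W.mulSum a k = some x → h x = ∑ t, (k t : ℝ) * s t := by
  choose K hK using W.exists_mulSum_eq ha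
  have hwd {k : Fin m → ℕ} {x : E} (hk : W.mulSum a k = some x) :
      ∑ t, (K x t : ℝ) * s t = ∑ t, (k t : ℝ) * s t :=
    W.sum_mul_eq_of_mulSum_eq ha hseq (hK x) hk
  have hnonneg (k : Fin m → ℕ) : 0 ≤ ∑ t, (k t : ℝ) * s t :=
    Finset.sum_nonneg fun t _ => mul_nonneg (Nat.cast_nonneg _) (hs t)
  have hle_one (x : E) : ∑ t, (K x t : ℝ) * s t ≤ 1 := by
    obtain ⟨x', hx', -⟩ := W.orthosupp x
    linarith [W.sum_mul_add_sum_mul_eq_one hseq (hK x) (hK x') hx', hnonneg (K x')]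
  refine ⟨fun x => ∑ t, (K x t : ℝ) * s t, ⟨fun x => ⟨hnonneg _, hle_one x⟩, hseq _ (hK W.one),
    fun p q r hpq => ?_⟩, fun k x hk => hwd hk⟩
  have hr := (hwd (W.mulSum_add (hK p) (hK q) hpq)).trans (sum_natCast_add_mul _ _ s)
  exact ⟨hr ▸ hle_one r, hr⟩

end EffectAlgebra

/-- If `A·s = 1` has a nonnegative real solution then `E` has a state,
namely `h (⨁ k t • a t) = ∑ t, k t * s t`. -/
theorem state_of_solution {E : Type*} [Fintype E] (W : EffectAlgebra E)
    {m n : ℕ} (a : Fin m → E) (ha : W.AtomFamily a)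
    (A : Matrix (Fin n) (Fin m) ℕ) (hA : W.MemM a A)
    (s : Fin m → ℝ) (hs : ∀ t, 0 ≤ s t)
    (hsol : ∀ i : Fin n, ∑ t : Fin m, (A i t : ℝ) * s t = 1) :
    ∃ h : E → ℝ, W.IsState h ∧
      ∀ (k : Fin m → ℕ) (x : E), W.mulSum a k = some x →
        h x = ∑ t : Fin m, (k t : ℝ) * s t := by
  refine W.exists_isState_of_forall_mem_seqSet ha.2.2 hs fun k hk => ?_
  obtain ⟨i, rfl⟩ : k ∈ {k | ∃ i, A i = k} := hA.2 ▸ hk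
  exact hsol i
end

section
/- Let E be a finite effect algebra with exactly three pairwise distinct atoms a_1, a_2, a_3 such that a_1 ⊕ a_2 ⊕ a_3 = 1 and 4a_1 = 4a_2 = 4a_3 = 1, and such that Seq(E) = {(1,1,1), (4,0,0), (0,4,0), (0,0,4)} ⊆ ℕ^3. Then E has no state. -/
namespace EffectAlgebra

variable {E : Type*} {W : EffectAlgebra E} {s : E → ℝ}

theorem IsState.map_zero (hs : W.IsState s) : s W.zero = 0 := by
  obtain ⟨q, hq, -⟩ := W.orthosupp W.one
  obtain rfl : q = W.zero := W.zero_unit q W.one hq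
  linarith [(hs.2.2 W.one W.zero W.one hq).2]

theorem IsState.map_listSum (hs : W.IsState s) :
    ∀ {L : List E} {v : E}, W.listSum L = some v → s v = (L.map s).sum
  | [], v, hv => by
    obtain rfl : W.zero = v := Option.some_injective _ hv
    simpa using hs.map_zero
  | x :: xs, v, hv => by
    obtain ⟨y, hy, hxy⟩ := Option.bind_eq_some_iff.mp hv
    rw [(hs.2.2 x y v hxy).2, hs.map_listSum hy, List.map_cons, List.sum_cons]

theorem IsState.map_mulSum (hs : W.IsState s) {m : ℕ} {a : Fin m → E} {k : Fin m → ℕ} {v : E}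
    (hv : W.mulSum a k = some v) : s v = ∑ t, k t * s (a t) := by
  rw [hs.map_listSum hv, List.map_flatten, List.sum_flatten, List.map_ofFn, List.map_ofFn,
    List.sum_ofFn]
  simp

end EffectAlgebra

theorem E4_no_state_general {E : Type*} (W : EffectAlgebra E)
    (a : Fin 3 → E)
    (h111 : W.mulSum a ![1,1,1] = some W.one)
    (h400 : W.mulSum a ![4,0,0] = some W.one)
    (h040 : W.mulSum a ![0,4,0] = some W.one)
    (h004 : W.mulSum a ![0,0,4] = some W.one) :
    ¬ ∃ h : E → ℝ, W.IsState h := by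
  rintro ⟨s, hs⟩
  have e111 := hs.map_mulSum h111
  have e400 := hs.map_mulSum h400
  have e040 := hs.map_mulSum h040
  have e004 := hs.map_mulSum h004
  simp only [hs.2.1, Fin.sum_univ_three, Matrix.cons_val_zero, Matrix.cons_val_one,
    Matrix.cons_val, Nat.cast_one, Nat.cast_ofNat, CharP.cast_eq_zero, one_mul, zero_mul,
    add_zero, zero_add] at e111 e400 e040 e004
  linarith

/-- The paper's example `E₄`: a finite effect algebra with three atoms
satisfying `a₁ ⊕ a₂ ⊕ a₃ = 1` and `4a₁ = 4a₂ = 4a₃ = 1`, whose `Seq(E)` is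
exactly `{(1,1,1), (4,0,0), (0,4,0), (0,0,4)}`, has no state. -/
theorem E4_no_state {E : Type*} [Fintype E] (W : EffectAlgebra E)
    (a : Fin 3 → E) (ha : W.AtomFamily a)
    (h111 : W.mulSum a ![1,1,1] = some W.one)
    (h400 : W.mulSum a ![4,0,0] = some W.one)
    (h040 : W.mulSum a ![0,4,0] = some W.one)
    (h004 : W.mulSum a ![0,0,4] = some W.one)
    (hSeq : W.SeqSet a =
      {k : Fin 3 → ℕ | k = ![1,1,1] ∨ k = ![4,0,0] ∨ k = ![0,4,0] ∨ k = ![0,0,4]}) :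
    ¬ ∃ h : E → ℝ, W.IsState h :=
  E4_no_state_general W a h111 h400 h040 h004
end
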